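/- (Compositionality for the second product •₋.) Let x₊, y₊ ∈ evenOdd Q 0 and x₋, y₋ ∈ evenOdd Q 1, and set q₊ = x₊y₊ + (reverse y₋)x₋ and q₋ = y₋x₊ + x₋(reverse y₊), so that q₊ + q₋ = (x₊+x₋) •₋ (y₊+y₋) with q₊ even and q₋ odd. Then N₋(x •₋ y) = N₋(x)N₋(y); concretely, q₊ * reverse(q₊) − reverse(q₋) * q₋ = (x₊ * reverse(x₊) − reverse(x₋) * x₋) * (y₊ * reverse(y₊) − reverse(y₋) * y₋). -/
import Mathlib

open CliffordAlgebra

/-- The diagonal quadratic form on `ℝ³` with weights `l`. -/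
noncomputable def Qf (l : Fin 3 → ℝ) : QuadraticForm ℝ (Fin 3 → ℝ) :=
  QuadraticMap.weightedSumSquares ℝ l

/-- The octonionic product `x • y` of `x = x₊ + x₋` and `y = y₊ + y₋`, expressed in terms of
the even/odd parts: `x • y = x₊y₊ - (reverse y₋)x₋ + y₋x₊ + x₋(reverse y₊)`. -/
noncomputable def octMul {R M : Type*} [CommRing R] [AddCommGroup M] [Module R M]
    (Q : QuadraticForm R M) (xp xm yp ym : CliffordAlgebra Q) : CliffordAlgebra Q :=
  xp * yp - reverse ym * xm + ym * xp + xm * reverse yp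

/-- The octonionic norm `N(x) = x • x*`, where `x* = reverse x₊ - x₋` is the full grade
inversion of `x = x₊ + x₋`. -/
noncomputable def octNorm {R M : Type*} [CommRing R] [AddCommGroup M] [Module R M]
    (Q : QuadraticForm R M) (xp xm : CliffordAlgebra Q) : CliffordAlgebra Q :=
  octMul Q xp xm (reverse xp) (-xm)

/-- The second product `x •₋ y = x₊y₊ + (reverse y₋)x₋ + y₋x₊ + x₋(reverse y₊)`, expressed in
terms of the even/odd parts of `x` and `y`. -/
noncomputable def octMulNeg {R M : Type*} [CommRing R] [AddCommGroup M] [Module R M]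
    (Q : QuadraticForm R M) (xp xm yp ym : CliffordAlgebra Q) : CliffordAlgebra Q :=
  xp * yp + reverse ym * xm + ym * xp + xm * reverse yp

/-- The norm `N₋(x) = x •₋ x*`, where `x* = reverse x₊ - x₋`. -/
noncomputable def octNormNeg {R M : Type*} [CommRing R] [AddCommGroup M] [Module R M]
    (Q : QuadraticForm R M) (xp xm : CliffordAlgebra Q) : CliffordAlgebra Q :=
  octMulNeg Q xp xm (reverse xp) (-xm)

/- ### Auxiliary development -/

noncomputable def ee (l : Fin 3 → ℝ) (i : Fin 3) : CliffordAlgebra (Qf l) :=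
  ι (Qf l) (Pi.single i 1)

noncomputable def EC (l : Fin 3 → ℝ) (p0 p1 p2 p3 : ℝ) : CliffordAlgebra (Qf l) :=
  p0 • 1 + p1 • (ee l 0 * ee l 1) + p2 • (ee l 0 * ee l 2) + p3 • (ee l 1 * ee l 2)

noncomputable def OC (l : Fin 3 → ℝ) (p0 p1 p2 p3 : ℝ) : CliffordAlgebra (Qf l) :=
  p0 • ee l 0 + p1 • ee l 1 + p2 • ee l 2 + p3 • (ee l 0 * (ee l 1 * ee l 2))

lemma Qf_single (l : Fin 3 → ℝ) (i : Fin 3) : Qf l (Pi.single i 1) = l i := by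
  fin_cases i <;>
    simp [Qf, QuadraticMap.weightedSumSquares_apply, Fin.sum_univ_three, Pi.single_apply]

lemma polar_single (l : Fin 3 → ℝ) (i j : Fin 3) (h : i ≠ j) :
    QuadraticMap.polar (Qf l) (Pi.single i 1) (Pi.single j 1) = 0 := by
  fin_cases i <;> fin_cases j <;>
    simp_all [QuadraticMap.polar, Qf, QuadraticMap.weightedSumSquares_apply,
      Fin.sum_univ_three, Pi.single_apply] <;> ring

lemma ee_sq (l : Fin 3 → ℝ) (i : Fin 3) :
    ee l i * ee l i = l i • (1 : CliffordAlgebra (Qf l)) := by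
  rw [ee, ι_sq_scalar, Qf_single, Algebra.algebraMap_eq_smul_one]

lemma ee_sq' (l : Fin 3 → ℝ) (i : Fin 3) (x : CliffordAlgebra (Qf l)) :
    ee l i * (ee l i * x) = l i • x := by
  rw [← mul_assoc, ee_sq, smul_mul_assoc, one_mul]

lemma ee_swap (l : Fin 3 → ℝ) {i j : Fin 3} (h : i ≠ j) :
    ee l i * ee l j = -(ee l j * ee l i) := by
  have h2 := ι_mul_ι_add_swap (Q := Qf l) (Pi.single i 1) (Pi.single j 1)
  rw [polar_single l i j h, map_zero] at h2
  rw [ee, ee]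
  exact eq_neg_of_add_eq_zero_left h2

lemma ee_swap' (l : Fin 3 → ℝ) {i j : Fin 3} (h : i ≠ j) (x : CliffordAlgebra (Qf l)) :
    ee l i * (ee l j * x) = -(ee l j * (ee l i * x)) := by
  rw [← mul_assoc, ee_swap l h, neg_mul, mul_assoc]

lemma s10 (l : Fin 3 → ℝ) (x : CliffordAlgebra (Qf l)) :
    ee l 1 * (ee l 0 * x) = -(ee l 0 * (ee l 1 * x)) := ee_swap' l (by decide) x
lemma s10' (l : Fin 3 → ℝ) : ee l 1 * ee l 0 = -(ee l 0 * ee l 1) := ee_swap l (by decide)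
lemma s20 (l : Fin 3 → ℝ) (x : CliffordAlgebra (Qf l)) :
    ee l 2 * (ee l 0 * x) = -(ee l 0 * (ee l 2 * x)) := ee_swap' l (by decide) x
lemma s20' (l : Fin 3 → ℝ) : ee l 2 * ee l 0 = -(ee l 0 * ee l 2) := ee_swap l (by decide)
lemma s21 (l : Fin 3 → ℝ) (x : CliffordAlgebra (Qf l)) :
    ee l 2 * (ee l 1 * x) = -(ee l 1 * (ee l 2 * x)) := ee_swap' l (by decide) x
lemma s21' (l : Fin 3 → ℝ) : ee l 2 * ee l 1 = -(ee l 1 * ee l 2) := ee_swap l (by decide)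

lemma rev_ee (l : Fin 3 → ℝ) (i : Fin 3) : reverse (ee l i) = ee l i := reverse_ι _

lemma mulEE (l : Fin 3 → ℝ) (p0 p1 p2 p3 q0 q1 q2 q3 : ℝ) :
    EC l p0 p1 p2 p3 * EC l q0 q1 q2 q3 =
      EC l (-l 0 * l 1 * p1 * q1 - l 0 * l 2 * p2 * q2 - l 1 * l 2 * p3 * q3 + p0 * q0)
        (-l 2 * p2 * q3 + l 2 * p3 * q2 + p0 * q1 + p1 * q0)
        (l 1 * p1 * q3 - l 1 * p3 * q1 + p0 * q2 + p2 * q0)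
        (-l 0 * p1 * q2 + l 0 * p2 * q1 + p0 * q3 + p3 * q0) := by
  simp only [EC, OC, mul_add, add_mul, mul_neg, neg_mul, neg_neg, smul_mul_assoc, mul_smul_comm, smul_smul, smul_neg, neg_smul, one_mul, mul_one, mul_assoc, ee_sq, ee_sq', s10, s10', s20, s20', s21, s21', map_add, map_smul, reverse.map_mul, rev_ee, reverse.map_one]
  all_goals match_scalars <;> ring

lemma mulOO (l : Fin 3 → ℝ) (p0 p1 p2 p3 q0 q1 q2 q3 : ℝ) :
    OC l p0 p1 p2 p3 * OC l q0 q1 q2 q3 =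
      EC l (-l 0 * l 1 * l 2 * p3 * q3 + l 0 * p0 * q0 + l 1 * p1 * q1 + l 2 * p2 * q2)
        (l 2 * p2 * q3 + l 2 * p3 * q2 + p0 * q1 - p1 * q0)
        (-l 1 * p1 * q3 - l 1 * p3 * q1 + p0 * q2 - p2 * q0)
        (l 0 * p0 * q3 + l 0 * p3 * q0 + p1 * q2 - p2 * q1) := by
  simp only [EC, OC, mul_add, add_mul, mul_neg, neg_mul, neg_neg, smul_mul_assoc, mul_smul_comm, smul_smul, smul_neg, neg_smul, one_mul, mul_one, mul_assoc, ee_sq, ee_sq', s10, s10', s20, s20', s21, s21', map_add, map_smul, reverse.map_mul, rev_ee, reverse.map_one]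
  all_goals match_scalars <;> ring

lemma mulOE (l : Fin 3 → ℝ) (p0 p1 p2 p3 q0 q1 q2 q3 : ℝ) :
    OC l p0 p1 p2 p3 * EC l q0 q1 q2 q3 =
      OC l (-l 1 * l 2 * p3 * q3 - l 1 * p1 * q1 - l 2 * p2 * q2 + p0 * q0)
        (l 0 * l 2 * p3 * q2 + l 0 * p0 * q1 - l 2 * p2 * q3 + p1 * q0)
        (-l 0 * l 1 * p3 * q1 + l 0 * p0 * q2 + l 1 * p1 * q3 + p2 * q0)
        (p0 * q3 - p1 * q2 + p2 * q1 + p3 * q0) := by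
  simp only [EC, OC, mul_add, add_mul, mul_neg, neg_mul, neg_neg, smul_mul_assoc, mul_smul_comm, smul_smul, smul_neg, neg_smul, one_mul, mul_one, mul_assoc, ee_sq, ee_sq', s10, s10', s20, s20', s21, s21', map_add, map_smul, reverse.map_mul, rev_ee, reverse.map_one]
  all_goals match_scalars <;> ring

lemma mulEO (l : Fin 3 → ℝ) (p0 p1 p2 p3 q0 q1 q2 q3 : ℝ) :
    EC l p0 p1 p2 p3 * OC l q0 q1 q2 q3 =
      OC l (-l 1 * l 2 * p3 * q3 + l 1 * p1 * q1 + l 2 * p2 * q2 + p0 * q0)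
        (l 0 * l 2 * p2 * q3 - l 0 * p1 * q0 + l 2 * p3 * q2 + p0 * q1)
        (-l 0 * l 1 * p1 * q3 - l 0 * p2 * q0 - l 1 * p3 * q1 + p0 * q2)
        (p0 * q3 + p1 * q2 - p2 * q1 + p3 * q0) := by
  simp only [EC, OC, mul_add, add_mul, mul_neg, neg_mul, neg_neg, smul_mul_assoc, mul_smul_comm, smul_smul, smul_neg, neg_smul, one_mul, mul_one, mul_assoc, ee_sq, ee_sq', s10, s10', s20, s20', s21, s21', map_add, map_smul, reverse.map_mul, rev_ee, reverse.map_one]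
  all_goals match_scalars <;> ring

lemma revE (l : Fin 3 → ℝ) (p0 p1 p2 p3 : ℝ) :
    reverse (EC l p0 p1 p2 p3) = EC l p0 (-p1) (-p2) (-p3) := by
  simp only [EC, mul_add, add_mul, mul_neg, neg_mul, neg_neg, smul_mul_assoc, mul_smul_comm, smul_smul, smul_neg, neg_smul, one_mul, mul_one, mul_assoc, ee_sq, ee_sq', s10, s10', s20, s20', s21, s21', map_add, map_smul, reverse.map_mul, rev_ee, reverse.map_one]
  all_goals match_scalars <;> ring

lemma revO (l : Fin 3 → ℝ) (p0 p1 p2 p3 : ℝ) :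
    reverse (OC l p0 p1 p2 p3) = OC l p0 p1 p2 (-p3) := by
  simp only [OC, mul_add, add_mul, mul_neg, neg_mul, neg_neg, smul_mul_assoc, mul_smul_comm, smul_smul, smul_neg, neg_smul, one_mul, mul_one, mul_assoc, ee_sq, ee_sq', s10, s10', s20, s20', s21, s21', map_add, map_smul, reverse.map_mul, rev_ee, reverse.map_one]
  all_goals match_scalars <;> ring

lemma addE (l : Fin 3 → ℝ) (p0 p1 p2 p3 q0 q1 q2 q3 : ℝ) :
    EC l p0 p1 p2 p3 + EC l q0 q1 q2 q3 = EC l (p0+q0) (p1+q1) (p2+q2) (p3+q3) := by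
  simp only [EC]; all_goals match_scalars <;> ring

lemma subE (l : Fin 3 → ℝ) (p0 p1 p2 p3 q0 q1 q2 q3 : ℝ) :
    EC l p0 p1 p2 p3 - EC l q0 q1 q2 q3 = EC l (p0-q0) (p1-q1) (p2-q2) (p3-q3) := by
  simp only [EC]; all_goals match_scalars <;> ring

lemma addO (l : Fin 3 → ℝ) (p0 p1 p2 p3 q0 q1 q2 q3 : ℝ) :
    OC l p0 p1 p2 p3 + OC l q0 q1 q2 q3 = OC l (p0+q0) (p1+q1) (p2+q2) (p3+q3) := by
  simp only [OC]; all_goals match_scalars <;> ring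

lemma negO (l : Fin 3 → ℝ) (p0 p1 p2 p3 : ℝ) :
    -OC l p0 p1 p2 p3 = OC l (-p0) (-p1) (-p2) (-p3) := by
  simp only [OC]; all_goals match_scalars <;> ring

lemma EC_congr (l : Fin 3 → ℝ) {p0 p1 p2 p3 q0 q1 q2 q3 : ℝ}
    (h0 : p0 = q0) (h1 : p1 = q1) (h2 : p2 = q2) (h3 : p3 = q3) :
    EC l p0 p1 p2 p3 = EC l q0 q1 q2 q3 := by rw [h0, h1, h2, h3]

lemma iota_eq (l : Fin 3 → ℝ) (m : Fin 3 → ℝ) :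
    ι (Qf l) m = OC l (m 0) (m 1) (m 2) 0 := by
  have hm : m = m 0 • (Pi.single 0 1 : Fin 3 → ℝ) + m 1 • (Pi.single 1 1 : Fin 3 → ℝ) + m 2 • (Pi.single 2 1 : Fin 3 → ℝ) := by
    funext j; fin_cases j <;> simp [Pi.single_apply]
  conv_lhs => rw [hm]
  simp [OC, ee, map_add, map_smul]

lemma even_coords (l : Fin 3 → ℝ) {x : CliffordAlgebra (Qf l)} (hx : x ∈ evenOdd (Qf l) 0) :
    ∃ p0 p1 p2 p3 : ℝ, x = EC l p0 p1 p2 p3 := by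
  induction x, hx using even_induction with
  | algebraMap r =>
    exact ⟨r, 0, 0, 0, by simp [EC, Algebra.algebraMap_eq_smul_one]⟩
  | add x y hx hy ihx ihy =>
    obtain ⟨a0, a1, a2, a3, rfl⟩ := ihx
    obtain ⟨b0, b1, b2, b3, rfl⟩ := ihy
    exact ⟨_, _, _, _, addE l a0 a1 a2 a3 b0 b1 b2 b3⟩
  | ι_mul_ι_mul m₁ m₂ x hx ih =>
    obtain ⟨a0, a1, a2, a3, rfl⟩ := ih
    simp only [iota_eq, mulOO, mulEE]
    exact ⟨_, _, _, _, rfl⟩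

lemma odd_coords (l : Fin 3 → ℝ) {x : CliffordAlgebra (Qf l)} (hx : x ∈ evenOdd (Qf l) 1) :
    ∃ p0 p1 p2 p3 : ℝ, x = OC l p0 p1 p2 p3 := by
  induction x, hx using odd_induction with
  | ι v => exact ⟨v 0, v 1, v 2, 0, iota_eq l v⟩
  | add x y hx hy ihx ihy =>
    obtain ⟨a0, a1, a2, a3, rfl⟩ := ihx
    obtain ⟨b0, b1, b2, b3, rfl⟩ := ihy
    exact ⟨_, _, _, _, addO l a0 a1 a2 a3 b0 b1 b2 b3⟩
  | ι_mul_ι_mul m₁ m₂ x hx ih =>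
    obtain ⟨a0, a1, a2, a3, rfl⟩ := ih
    simp only [iota_eq, mulOO, mulEO]
    exact ⟨_, _, _, _, rfl⟩

lemma octNormNeg_eq {R M : Type*} [CommRing R] [AddCommGroup M] [Module R M]
    (Q : QuadraticForm R M) (xp xm : CliffordAlgebra Q) :
    octNormNeg Q xp xm = xp * reverse xp - reverse xm * xm := by
  simp only [octNormNeg, octMulNeg, map_neg, reverse_reverse, neg_mul]
  abel

/-- (Compositionality for the second product `•₋`.) With `q₊ = x₊y₊ + (reverse y₋)x₋` and
`q₋ = y₋x₊ + x₋(reverse y₊)` the even and odd parts of `x •₋ y`, one has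
`N₋(x •₋ y) = N₋(x)N₋(y)`; concretely,
`q₊ * reverse q₊ - reverse q₋ * q₋ = (x₊ * reverse x₊ - reverse x₋ * x₋) * (y₊ * reverse y₊ - reverse y₋ * y₋)`. -/
theorem octNormNeg_mul (l : Fin 3 → ℝ) (hl : ∀ i, l i = 1 ∨ l i = -1)
    (xp xm yp ym : CliffordAlgebra (Qf l))
    (hxp : xp ∈ evenOdd (Qf l) 0) (hxm : xm ∈ evenOdd (Qf l) 1)
    (hyp : yp ∈ evenOdd (Qf l) 0) (hym : ym ∈ evenOdd (Qf l) 1) :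
    octNormNeg (Qf l) (xp * yp + reverse ym * xm) (ym * xp + xm * reverse yp) =
      octNormNeg (Qf l) xp xm * octNormNeg (Qf l) yp ym ∧
    (xp * yp + reverse ym * xm) * reverse (xp * yp + reverse ym * xm) -
        reverse (ym * xp + xm * reverse yp) * (ym * xp + xm * reverse yp) =
      (xp * reverse xp - reverse xm * xm) * (yp * reverse yp - reverse ym * ym) := by
  obtain ⟨a0, a1, a2, a3, rfl⟩ := even_coords l hxp
  obtain ⟨b0, b1, b2, b3, rfl⟩ := odd_coords l hxm
  obtain ⟨c0, c1, c2, c3, rfl⟩ := even_coords l hyp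
  obtain ⟨d0, d1, d2, d3, rfl⟩ := odd_coords l hym
  have key :
      (EC l a0 a1 a2 a3 * EC l c0 c1 c2 c3 + reverse (OC l d0 d1 d2 d3) * OC l b0 b1 b2 b3) *
          reverse (EC l a0 a1 a2 a3 * EC l c0 c1 c2 c3 +
            reverse (OC l d0 d1 d2 d3) * OC l b0 b1 b2 b3) -
        reverse (OC l d0 d1 d2 d3 * EC l a0 a1 a2 a3 +
            OC l b0 b1 b2 b3 * reverse (EC l c0 c1 c2 c3)) *
          (OC l d0 d1 d2 d3 * EC l a0 a1 a2 a3 +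
            OC l b0 b1 b2 b3 * reverse (EC l c0 c1 c2 c3)) =
      (EC l a0 a1 a2 a3 * reverse (EC l a0 a1 a2 a3) -
          reverse (OC l b0 b1 b2 b3) * OC l b0 b1 b2 b3) *
        (EC l c0 c1 c2 c3 * reverse (EC l c0 c1 c2 c3) -
          reverse (OC l d0 d1 d2 d3) * OC l d0 d1 d2 d3) := by
    simp only [revE, revO, mulEE, mulOO, mulOE, mulEO, addE, addO, subE, negO]
    exact EC_congr l (by ring) (by ring) (by ring) (by ring)
  refine ⟨?_, key⟩
  rw [octNormNeg_eq, octNormNeg_eq, octNormNeg_eq]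
  exact key
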